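/- The Coxeter transformations satisfy: θ(S_•) = −S_•, and for all a, b ∈ ℤY one has θ(a / b) = −θ(a) * θ(b) and θ(a * b) = −θ(a) ∖ θ(b), where θ denotes the direct sum of the θ_n acting on ℤY. -/

import Mathlib

/-- A planar binary tree: either the trivial tree (a leaf) or an ordered pair of
planar binary trees. -/
inductive PBT : Type
  | leaf : PBT
  | node : PBT → PBT → PBT
  deriving DecidableEq

namespace PBT

/-- Number of internal vertices of a planar binary tree. -/
def size : PBT → ℕ
  | leaf => 0
  | node a b => a.size + b.size + 1

/-- One covering move of the Tamari order: `Rot x y` holds when `y` is obtained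
from `x` by replacing some subtree of the form `((a,b),c)` by `(a,(b,c))`. -/
inductive Rot : PBT → PBT → Prop
  | rot (a b c : PBT) : Rot (node (node a b) c) (node a (node b c))
  | left {a a' : PBT} (b : PBT) : Rot a a' → Rot (node a b) (node a' b)
  | right (a : PBT) {b b' : PBT} : Rot b b' → Rot (node a b) (node a b')

/-- The Tamari order: reflexive-transitive closure of `Rot`. -/
def tle (x y : PBT) : Prop := Relation.ReflTransGen Rot x y

/-- Grafting of `x` on the leftmost leaf of `y` : the operation `x / y`. -/
def graftOver : PBT → PBT → PBT
  | x, leaf => x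
  | x, node y₁ y₂ => node (graftOver x y₁) y₂

/-- Grafting of `y` on the rightmost leaf of `x` : the operation `x ∖ y`. -/
def under : PBT → PBT → PBT
  | leaf, y => y
  | node x₁ x₂, y => node x₁ (under x₂ y)

theorem Rot.size_eq {x y : PBT} (h : Rot x y) : x.size = y.size := by
  induction h <;> simp [size] <;> omega

theorem tle.size_eq {x y : PBT} (h : tle x y) : x.size = y.size := by
  induction h with
  | refl => rfl
  | tail _ h ih => rw [ih, h.size_eq]

theorem finite_size_le (n : ℕ) : {z : PBT | z.size ≤ n}.Finite := by
  induction n with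
  | zero =>
    apply Set.Finite.subset (Set.finite_singleton leaf)
    rintro (_ | ⟨a, b⟩) hz
    · simp
    · simp [size] at hz
  | succ n ih =>
    apply Set.Finite.subset ((Set.Finite.image2 node ih ih).insert leaf)
    rintro (_ | ⟨a, b⟩) hz
    · simp
    · simp only [Set.mem_setOf_eq, size] at hz
      exact Set.mem_insert_iff.mpr
        (Or.inr (Set.mem_image2.mpr ⟨a, by simp only [Set.mem_setOf_eq]; omega, b, by simp only [Set.mem_setOf_eq]; omega, rfl⟩))

theorem finite_size (n : ℕ) : {z : PBT | z.size = n}.Finite :=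
  (finite_size_le n).subset fun _ hz => le_of_eq hz

theorem finite_tle_right (x : PBT) : {y : PBT | tle y x}.Finite :=
  (finite_size x.size).subset fun _ hy => hy.size_eq

theorem finite_tle_left (x : PBT) : {y : PBT | tle x y}.Finite :=
  (finite_size x.size).subset fun _ hy => hy.size_eq.symm

theorem finite_interval (x y : PBT) :
    {z : PBT | tle (graftOver x y) z ∧ tle z (under x y)}.Finite :=
  (finite_tle_right (under x y)).subset fun _ hz => hz.2

end PBT

/-- The free abelian group `ℤY = ⊕ₙ ℤYₙ` on the set of all planar binary trees. -/
abbrev ZY : Type := PBT →₀ ℤ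

namespace PBT

/-- The basis element `S_x` of `ℤY`. -/
noncomputable def S (x : PBT) : ZY := Finsupp.single x 1

/-- The class `P_x = ∑_{y ≤ x} S_y` of the projective module. -/
noncomputable def P (x : PBT) : ZY := ∑ y ∈ (finite_tle_right x).toFinset, S y

/-- The class `I_x = ∑_{y ≥ x} S_y` of the injective module. -/
noncomputable def I (x : PBT) : ZY := ∑ y ∈ (finite_tle_left x).toFinset, S y

/-- The Loday-Ronco product on basis elements:
`S_x * S_y = ∑_{x/y ≤ z ≤ x∖y} S_z`. -/
noncomputable def starB (x y : PBT) : ZY := ∑ z ∈ (finite_interval x y).toFinset, S z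

/-- Bilinear extension of a product defined on basis elements. -/
noncomputable def bilin (f : PBT → PBT → ZY) (a b : ZY) : ZY :=
  a.sum fun x ax => b.sum fun y byy => (ax * byy) • f x y

/-- The product `/` on `ℤY`, with `S_x / S_y = S_{x/y}`. -/
noncomputable def overM : ZY → ZY → ZY := bilin fun x y => S (x.graftOver y)

/-- The product `∖` on `ℤY`, with `S_x ∖ S_y = S_{x∖y}`. -/
noncomputable def underM : ZY → ZY → ZY := bilin fun x y => S (x.under y)

/-- The Loday-Ronco product `*` on `ℤY`. -/
noncomputable def starM : ZY → ZY → ZY := bilin starB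

/-- The unique planar binary tree `•` with one internal vertex. -/
def dot : PBT := node leaf leaf

end PBT

/-!
The Coxeter transformation sends the basis `P` to the basis `-I`, and on these bases the products
are grafting again: `P_x / P_y = P_{x/y}`, `P_x * P_y = P_{x∖y}`, `I_x * I_y = I_{x/y}` and
`I_x ∖ I_y = I_{x∖y}`. All four identities come from one combinatorial fact: for fixed `m`, the
Tamari intervals `[u/v, u∖v]` with `|u| = m` partition the trees of size at least `m`, the block
containing `z` being found by cutting `z` after its first `m` vertices in infix order (`split`).
This cut is monotone for the Tamari order, and the trees of the form `u/v` (resp. `u∖v`) form a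
lower (resp. upper) set, which turns products of the sums `P`, `I` into sums over one interval.
-/

theorem Finset.sum_sum_sum_eq_of_fibers {ι κ μ M : Type*} [AddCommMonoid M] [DecidableEq ι]
    [DecidableEq κ] {A : Finset ι} {B : Finset κ} {T : Finset μ} {J : ι → κ → Finset μ}
    (σ : μ → ι × κ) (hT : ∀ z ∈ T, σ z ∈ A ×ˢ B)
    (hJ : ∀ u ∈ A, ∀ v ∈ B, ∀ z, z ∈ J u v ↔ z ∈ T ∧ σ z = (u, v))
    (f : μ → M) :
    ∑ u ∈ A, ∑ v ∈ B, ∑ z ∈ J u v, f z = ∑ z ∈ T, f z := by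
  rw [← Finset.sum_fiberwise_of_maps_to hT, Finset.sum_product]
  refine Finset.sum_congr rfl fun u hu => Finset.sum_congr rfl fun v hv => ?_
  congr 1
  ext z
  rw [hJ u hu v hv, Finset.mem_filter]

theorem Finset.sum_sum_eq_of_fibers {ι κ μ M : Type*} [AddCommMonoid M] [DecidableEq ι]
    [DecidableEq κ] {A : Finset ι} {B : Finset κ} {T : Finset μ} {g : ι → κ → μ}
    (σ : μ → ι × κ) (hT : ∀ z ∈ T, σ z ∈ A ×ˢ B)
    (hg : ∀ u ∈ A, ∀ v ∈ B, ∀ z, z = g u v ↔ z ∈ T ∧ σ z = (u, v)) (f : μ → M) :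
    ∑ u ∈ A, ∑ v ∈ B, f (g u v) = ∑ z ∈ T, f z := by
  simpa using Finset.sum_sum_sum_eq_of_fibers (J := fun u v => {g u v}) σ hT
    (by simpa using hg) f

namespace PBT

def rank : PBT → ℕ
  | leaf => 0
  | node a b => rank a + rank b + size b

theorem Rot.rank_lt {x y : PBT} (h : Rot x y) : rank x < rank y := by
  induction h with
  | rot a b c => simp only [rank, size]; omega
  | left b _ ih => simp only [rank]; omega
  | right a h ih => simp only [rank, h.size_eq]; omega

theorem rank_le_of_tle {x y : PBT} (h : tle x y) : rank x ≤ rank y :=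
  Relation.ReflTransGen.rec le_rfl (fun _ h ih => ih.trans h.rank_lt.le) h

theorem rank_lt_of_tle {x y : PBT} (h : tle x y) (hne : x ≠ y) : rank x < rank y := by
  obtain ⟨z, hxz, hzy⟩ := h.cases_tail.resolve_left hne.symm
  exact (rank_le_of_tle hxz).trans_lt hzy.rank_lt

theorem tle_antisymm {x y : PBT} (hxy : tle x y) (hyx : tle y x) : x = y :=
  by_contra fun hne => (rank_lt_of_tle hxy hne).not_ge (rank_le_of_tle hyx)

instance : PartialOrder PBT where
  le := tle
  le_refl _ := Relation.ReflTransGen.refl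
  le_trans _ _ _ := Relation.ReflTransGen.trans
  le_antisymm _ _ := tle_antisymm

theorem Rot.le {x y : PBT} (h : Rot x y) : x ≤ y := Relation.ReflTransGen.single h

theorem size_eq_of_le {x y : PBT} (h : x ≤ y) : x.size = y.size := tle.size_eq h

theorem rank_strictMono : StrictMono rank := fun _ _ h => rank_lt_of_tle h.le h.ne

instance : WellFoundedLT PBT := rank_strictMono.wellFoundedLT

theorem monotone_of_rot {f : PBT → PBT} (hf : ∀ x y, Rot x y → Rot (f x) (f y)) :
    Monotone f :=
  fun _ _ h => Relation.ReflTransGen.lift f hf _ _ h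

theorem node_le_node {a a' b b' : PBT} (ha : a ≤ a') (hb : b ≤ b') : node a b ≤ node a' b' :=
  (monotone_of_rot (fun _ _ => Rot.left b) ha).trans (monotone_of_rot (fun _ _ => Rot.right a') hb)

theorem size_graftOver (x y : PBT) : (graftOver x y).size = x.size + y.size := by
  induction y with
  | leaf => rfl
  | node y₁ y₂ ih _ => simp only [graftOver, size, ih]; omega

theorem Rot.graftOver_left {u u' : PBT} (h : Rot u u') (v : PBT) :
    Rot (graftOver u v) (graftOver u' v) := by
  induction v with
  | leaf => exact h
  | node v₁ v₂ ih _ => exact Rot.left v₂ ih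

theorem Rot.graftOver_right (u : PBT) {v v' : PBT} (h : Rot v v') :
    Rot (graftOver u v) (graftOver u v') := by
  induction h with
  | rot a b c => exact Rot.rot (graftOver u a) b c
  | left b _ ih => exact Rot.left b ih
  | right a h _ => exact Rot.right (graftOver u a) h

theorem Rot.under_left {u u' : PBT} (h : Rot u u') (v : PBT) :
    Rot (under u v) (under u' v) := by
  induction h with
  | rot a b c => exact Rot.rot a b (under c v)
  | left b h _ => exact Rot.left (under b v) h
  | right a _ ih => exact Rot.right a ih

theorem Rot.under_right (u : PBT) {v v' : PBT} (h : Rot v v') :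
    Rot (under u v) (under u v') := by
  induction u with
  | leaf => exact h
  | node u₁ u₂ _ ih => exact Rot.right u₁ ih

theorem graftOver_le_graftOver {u u' v v' : PBT} (hu : u ≤ u') (hv : v ≤ v') :
    graftOver u v ≤ graftOver u' v' :=
  (monotone_of_rot (fun _ _ h => h.graftOver_left v) hu).trans
    (monotone_of_rot (fun _ _ => Rot.graftOver_right u') hv)

theorem under_le_under {u u' v v' : PBT} (hu : u ≤ u') (hv : v ≤ v') :
    under u v ≤ under u' v' :=
  (monotone_of_rot (fun _ _ h => h.under_left v) hu).trans
    (monotone_of_rot (fun _ _ => Rot.under_right u') hv)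

theorem graftOver_node_le (a b c : PBT) : graftOver (node a b) c ≤ node a (graftOver b c) := by
  induction c with
  | leaf => exact le_rfl
  | node c₁ c₂ ih _ =>
    exact (node_le_node ih le_rfl).trans (Rot.rot a (graftOver b c₁) c₂).le

theorem node_under_le (a b c : PBT) : node (under a b) c ≤ under a (node b c) := by
  induction a with
  | leaf => exact le_rfl
  | node a₁ a₂ _ ih => exact (Rot.rot a₁ (under a₂ b) c).le.trans (node_le_node le_rfl ih)

def split : PBT → ℕ → PBT × PBT
  | leaf, _ => (leaf, leaf)
  | node a b, m =>
    if m ≤ a.size then ((split a m).1, node (split a m).2 b)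
    else (node a (split b (m - a.size - 1)).1, (split b (m - a.size - 1)).2)

theorem split_node_of_le {a b : PBT} {m : ℕ} (h : m ≤ a.size) :
    split (node a b) m = ((split a m).1, node (split a m).2 b) := by
  rw [split, if_pos h]

theorem split_node_of_lt {a b : PBT} {m : ℕ} (h : a.size < m) :
    split (node a b) m = (node a (split b (m - a.size - 1)).1, (split b (m - a.size - 1)).2) := by
  rw [split, if_neg h.not_ge]

theorem split_zero (z : PBT) : split z 0 = (leaf, z) := by
  induction z with
  | leaf => rfl
  | node a b ih _ => rw [split_node_of_le (Nat.zero_le _), ih]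

theorem split_size (z : PBT) : split z z.size = (z, leaf) := by
  induction z with
  | leaf => rfl
  | node a b _ ih =>
    have hsize : (node a b).size - a.size - 1 = b.size := by simp only [size]; omega
    rw [split_node_of_lt (by simp only [size]; omega), hsize, ih]

theorem split_graftOver (u v : PBT) : split (graftOver u v) u.size = (u, v) := by
  induction v with
  | leaf => exact split_size u
  | node v₁ v₂ ih _ =>
    rw [graftOver, split_node_of_le (by rw [size_graftOver]; omega), ih]

theorem split_under (u v : PBT) : split (under u v) u.size = (u, v) := by
  induction u with
  | leaf => exact split_zero v
  | node u₁ u₂ _ ih =>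
    have hsize : (node u₁ u₂).size - u₁.size - 1 = u₂.size := by simp only [size]; omega
    rw [under, split_node_of_lt (by simp only [size]; omega), hsize, ih]

theorem mem_Icc_split (z : PBT) (m : ℕ) :
    z ∈ Set.Icc (graftOver (split z m).1 (split z m).2) (under (split z m).1 (split z m).2) := by
  induction z generalizing m with
  | leaf => exact ⟨le_rfl, le_rfl⟩
  | node a b iha ihb =>
    rcases le_or_gt m a.size with h | h
    · rw [split_node_of_le h]
      exact ⟨node_le_node (iha m).1 le_rfl,
        (node_le_node (iha m).2 le_rfl).trans (node_under_le _ _ b)⟩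
    · rw [split_node_of_lt h]
      exact ⟨(graftOver_node_le a _ _).trans (node_le_node le_rfl (ihb _).1),
        node_le_node le_rfl (ihb _).2⟩

theorem Rot.split_le {z z' : PBT} (h : Rot z z') (m : ℕ) : split z m ≤ split z' m := by
  induction h generalizing m with
  | rot a b c =>
    rcases le_or_gt m a.size with h₁ | h₁
    · rw [split_node_of_le (by simp only [size]; omega), split_node_of_le h₁,
        split_node_of_le h₁]
      exact ⟨le_rfl, (Rot.rot _ b c).le⟩
    rcases le_or_gt m (node a b).size with h₂ | h₂
    · rw [split_node_of_le h₂, split_node_of_lt h₁, split_node_of_lt h₁,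
        split_node_of_le (by simp only [size] at h₂; omega)]
    · rw [split_node_of_lt h₂, split_node_of_lt h₁,
        split_node_of_lt (by simp only [size] at h₂; omega),
        show m - (node a b).size - 1 = m - a.size - 1 - b.size - 1 by simp only [size]; omega]
      exact ⟨(Rot.rot a b _).le, le_rfl⟩
  | @left a a' b h ih =>
    rcases le_or_gt m a.size with h₁ | h₁
    · rw [split_node_of_le h₁, split_node_of_le (h.size_eq ▸ h₁)]
      exact ⟨(ih m).1, node_le_node (ih m).2 le_rfl⟩
    · rw [split_node_of_lt h₁, split_node_of_lt (h.size_eq ▸ h₁), h.size_eq]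
      exact ⟨node_le_node h.le le_rfl, le_rfl⟩
  | @right a b b' h ih =>
    rcases le_or_gt m a.size with h₁ | h₁
    · rw [split_node_of_le h₁, split_node_of_le h₁]
      exact ⟨le_rfl, node_le_node le_rfl h.le⟩
    · rw [split_node_of_lt h₁, split_node_of_lt h₁]
      exact ⟨node_le_node le_rfl (ih _).1, (ih _).2⟩

theorem split_le_split {z z' : PBT} (h : z ≤ z') (m : ℕ) : split z m ≤ split z' m :=
  Relation.ReflTransGen.rec le_rfl (fun _ h ih => ih.trans (h.split_le m)) h

theorem split_eq_of_mem_Icc {u v z : PBT} (h : z ∈ Set.Icc (graftOver u v) (under u v)) :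
    split z u.size = (u, v) :=
  le_antisymm (split_under u v ▸ split_le_split h.2 _)
    (split_graftOver u v ▸ split_le_split h.1 _)

theorem Rot.exists_eq_graftOver {z u v : PBT} (h : Rot z (graftOver u v)) :
    ∃ q ≤ (u, v), z = graftOver q.1 q.2 := by
  induction v generalizing z with
  | leaf => exact ⟨(z, leaf), ⟨h.le, le_rfl⟩, rfl⟩
  | node v₁ v₂ ih _ =>
    cases h with
    | rot _ b c => exact ⟨(u, node (node v₁ b) c), ⟨le_rfl, (Rot.rot v₁ b c).le⟩, rfl⟩
    | left _ h =>
      obtain ⟨q, hq, rfl⟩ := ih h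
      exact ⟨(q.1, node q.2 v₂), ⟨hq.1, node_le_node hq.2 le_rfl⟩, rfl⟩
    | @right _ b _ h => exact ⟨(u, node v₁ b), ⟨le_rfl, (Rot.right v₁ h).le⟩, rfl⟩

theorem Rot.exists_eq_under {z u v : PBT} (h : Rot (under u v) z) :
    ∃ q ≥ (u, v), z = under q.1 q.2 := by
  induction u generalizing z with
  | leaf => exact ⟨(leaf, z), ⟨le_rfl, h.le⟩, rfl⟩
  | node u₁ u₂ _ ih =>
    cases h with
    | rot a b => exact ⟨(node a (node b u₂), v), ⟨(Rot.rot a b u₂).le, le_rfl⟩, rfl⟩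
    | left _ h => exact ⟨(node _ u₂, v), ⟨(Rot.left u₂ h).le, le_rfl⟩, rfl⟩
    | right _ h =>
      obtain ⟨q, hq, rfl⟩ := ih h
      exact ⟨(node u₁ q.1, q.2), ⟨node_le_node le_rfl hq.1, hq.2⟩, rfl⟩

theorem exists_eq_graftOver_of_le {z x y : PBT} (h : z ≤ graftOver x y) :
    ∃ q ≤ (x, y), z = graftOver q.1 q.2 := by
  induction h using Relation.ReflTransGen.head_induction_on with
  | refl => exact ⟨(x, y), le_rfl, rfl⟩
  | head hzw _ ih =>
    obtain ⟨q, hq, rfl⟩ := ih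
    obtain ⟨q', hq', rfl⟩ := hzw.exists_eq_graftOver
    exact ⟨q', hq'.trans hq, rfl⟩

theorem exists_eq_under_of_le {z x y : PBT} (h : under x y ≤ z) :
    ∃ q ≥ (x, y), z = under q.1 q.2 := by
  induction h with
  | refl => exact ⟨(x, y), le_rfl, rfl⟩
  | tail _ hwz ih =>
    obtain ⟨q, hq, rfl⟩ := ih
    obtain ⟨q', hq', rfl⟩ := hwz.exists_eq_under
    exact ⟨q', hq.trans hq', rfl⟩

theorem mem_toFinset_finite_tle_right {x y : PBT} :
    y ∈ (finite_tle_right x).toFinset ↔ y ≤ x :=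
  Set.Finite.mem_toFinset _

theorem mem_toFinset_finite_tle_left {x y : PBT} :
    y ∈ (finite_tle_left x).toFinset ↔ x ≤ y :=
  Set.Finite.mem_toFinset _

theorem mem_toFinset_finite_interval {x y z : PBT} :
    z ∈ (finite_interval x y).toFinset ↔ z ∈ Set.Icc (graftOver x y) (under x y) :=
  Set.Finite.mem_toFinset _

noncomputable def bilinHom (f : PBT → PBT → ZY) : ZY →+ ZY →+ ZY :=
  Finsupp.liftAddHom fun x => AddMonoidHom.flip <| Finsupp.liftAddHom fun y =>
    (AddMonoidHom.mul.compr₂ (zmultiplesHom ZY (f x y))).flip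

theorem bilinHom_apply (f : PBT → PBT → ZY) (a b : ZY) : bilinHom f a b = bilin f a b := by
  simp [bilinHom, bilin, Finsupp.liftAddHom_apply, Finsupp.sum, AddMonoidHom.finsetSum_apply]

theorem bilin_sum_S (f : PBT → PBT → ZY) (A B : Finset PBT) :
    bilin f (∑ u ∈ A, S u) (∑ v ∈ B, S v) = ∑ u ∈ A, ∑ v ∈ B, f u v := by
  simp [← bilinHom_apply, bilinHom, S, Finset.sum_comm (s := A)]

theorem overM_P (x y : PBT) : overM (P x) (P y) = P (graftOver x y) := by
  refine (bilin_sum_S _ _ _).trans (Finset.sum_sum_eq_of_fibers (split · x.size) ?_ ?_ S)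
  · intro z hz
    simp only [Finset.mem_product, mem_toFinset_finite_tle_right] at hz ⊢
    exact (split_graftOver x y ▸ split_le_split hz x.size :)
  · intro u hu v hv z
    simp only [mem_toFinset_finite_tle_right] at hu hv ⊢
    constructor
    · rintro rfl
      exact ⟨graftOver_le_graftOver hu hv, size_eq_of_le hu ▸ split_graftOver u v⟩
    · rintro ⟨hz, hs⟩
      obtain ⟨⟨u', v'⟩, ⟨hu', -⟩, rfl⟩ := exists_eq_graftOver_of_le hz
      rw [← size_eq_of_le hu', split_graftOver] at hs
      cases hs
      rfl

theorem starM_P (x y : PBT) : starM (P x) (P y) = P (under x y) := by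
  refine (bilin_sum_S _ _ _).trans (Finset.sum_sum_sum_eq_of_fibers (split · x.size) ?_ ?_ S)
  · intro z hz
    simp only [Finset.mem_product, mem_toFinset_finite_tle_right] at hz ⊢
    exact (split_under x y ▸ split_le_split hz x.size :)
  · intro u hu v hv z
    simp only [mem_toFinset_finite_tle_right, mem_toFinset_finite_interval] at hu hv ⊢
    constructor
    · intro hz
      exact ⟨hz.2.trans (under_le_under hu hv), size_eq_of_le hu ▸ split_eq_of_mem_Icc hz⟩
    · rintro ⟨-, hs⟩
      simpa only [hs] using mem_Icc_split z x.size

theorem starM_I (x y : PBT) : starM (I x) (I y) = I (graftOver x y) := by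
  refine (bilin_sum_S _ _ _).trans (Finset.sum_sum_sum_eq_of_fibers (split · x.size) ?_ ?_ S)
  · intro z hz
    simp only [Finset.mem_product, mem_toFinset_finite_tle_left] at hz ⊢
    exact (split_graftOver x y ▸ split_le_split hz x.size :)
  · intro u hu v hv z
    simp only [mem_toFinset_finite_tle_left, mem_toFinset_finite_interval] at hu hv ⊢
    constructor
    · intro hz
      exact ⟨(graftOver_le_graftOver hu hv).trans hz.1,
        (size_eq_of_le hu).symm ▸ split_eq_of_mem_Icc hz⟩
    · rintro ⟨-, hs⟩
      simpa only [hs] using mem_Icc_split z x.size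

theorem underM_I (x y : PBT) : underM (I x) (I y) = I (under x y) := by
  refine (bilin_sum_S _ _ _).trans (Finset.sum_sum_eq_of_fibers (split · x.size) ?_ ?_ S)
  · intro z hz
    simp only [Finset.mem_product, mem_toFinset_finite_tle_left] at hz ⊢
    exact (split_under x y ▸ split_le_split hz x.size :)
  · intro u hu v hv z
    simp only [mem_toFinset_finite_tle_left] at hu hv ⊢
    constructor
    · rintro rfl
      exact ⟨under_le_under hu hv, (size_eq_of_le hu).symm ▸ split_under u v⟩
    · rintro ⟨hz, hs⟩
      obtain ⟨⟨u', v'⟩, ⟨hu', -⟩, rfl⟩ := exists_eq_under_of_le hz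
      rw [show x.size = u'.size from size_eq_of_le hu', split_under] at hs
      cases hs
      rfl

theorem eq_dot_of_size_eq_one {z : PBT} (h : z.size = 1) : z = dot := by
  rcases z with _ | ⟨_ | ⟨_, _⟩, _ | ⟨_, _⟩⟩ <;> simp only [size] at h
  all_goals first | rfl | omega

theorem toFinset_finite_tle_right_dot : (finite_tle_right dot).toFinset = {dot} := by
  ext z
  simp only [mem_toFinset_finite_tle_right, Finset.mem_singleton]
  exact ⟨fun h => eq_dot_of_size_eq_one (size_eq_of_le h), fun h => h ▸ le_rfl⟩

theorem toFinset_finite_tle_left_dot : (finite_tle_left dot).toFinset = {dot} := by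
  ext z
  simp only [mem_toFinset_finite_tle_left, Finset.mem_singleton]
  exact ⟨fun h => eq_dot_of_size_eq_one (size_eq_of_le h).symm, fun h => h ▸ le_rfl⟩

theorem P_dot : P dot = S dot := by
  rw [P, toFinset_finite_tle_right_dot, Finset.sum_singleton]

theorem I_dot : I dot = S dot := by
  rw [I, toFinset_finite_tle_left_dot, Finset.sum_singleton]

theorem S_eq_P_sub (x : PBT) :
    S x = P x - ∑ y ∈ (finite_tle_right x).toFinset.erase x, S y := by
  rw [P, ← Finset.add_sum_erase _ S (mem_toFinset_finite_tle_right.mpr le_rfl),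
    add_sub_cancel_right]

theorem addMonoidHom_ext_P {M : Type*} [AddCommGroup M] {φ ψ : ZY →+ M}
    (h : ∀ x, φ (P x) = ψ (P x)) : φ = ψ := by
  ext x
  show φ (S x) = ψ (S x)
  induction x using WellFoundedLT.induction with
  | _ x ih =>
    rw [S_eq_P_sub, map_sub, map_sub, map_sum, map_sum, h]
    refine congrArg _ (Finset.sum_congr rfl fun y hy => ih y ?_)
    rw [Finset.mem_erase, mem_toFinset_finite_tle_right] at hy
    exact hy.2.lt_of_ne hy.1

theorem map_bilin_eq_neg_bilin_map (θ : ZY →+ ZY) (hθ : ∀ x, θ (P x) = -I x)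
    {f g : PBT → PBT → ZY} {op : PBT → PBT → PBT}
    (hf : ∀ x y, bilin f (P x) (P y) = P (op x y))
    (hg : ∀ x y, bilin g (I x) (I y) = I (op x y))
    (a b : ZY) : θ (bilin f a b) = -bilin g (θ a) (θ b) := by
  have key : (bilinHom f).compr₂ θ = -((bilinHom g).comp θ).compl₂ θ :=
    addMonoidHom_ext_P fun x => addMonoidHom_ext_P fun y => by
      show θ (bilinHom f (P x) (P y)) = -bilinHom g (θ (P x)) (θ (P y))
      rw [hθ, hθ, map_neg, map_neg, AddMonoidHom.neg_apply, neg_neg, bilinHom_apply,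
        bilinHom_apply, hf, hg, hθ]
  simpa [bilinHom_apply] using DFunLike.congr_fun (DFunLike.congr_fun key a) b

end PBT

open PBT in
/-- The Coxeter transformation `θ` (the unique additive map with `θ(P_x) = -I_x`)
satisfies `θ(S_•) = -S_•`, `θ(a / b) = -θ(a) * θ(b)` and `θ(a * b) = -θ(a) ∖ θ(b)`. -/
theorem coxeter_transformation_products (θ : ZY →+ ZY)
    (hθ : ∀ x : PBT, θ (P x) = - I x) :
    θ (S dot) = - S dot ∧
    (∀ a b : ZY, θ (overM a b) = - starM (θ a) (θ b)) ∧
    (∀ a b : ZY, θ (starM a b) = - underM (θ a) (θ b)) :=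
  ⟨by simpa only [P_dot, I_dot] using hθ dot, map_bilin_eq_neg_bilin_map θ hθ overM_P starM_I,
    map_bilin_eq_neg_bilin_map θ hθ starM_P underM_I⟩
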